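/- arXiv:0803.1612 — 5 statements merged into one kernel-verified Lean document; each statement's English description precedes it below -/
import Mathlib

section
/- The 2×2 matrices A = [[1, 2], [0, 1]] and B = [[1, 0], [2, 1]] over the integers generate a free group of rank 2. -/
/-!
Ping-pong on `R²`: a nonzero power `[[1, n k], [0, 1]]` of `A` sends every vector with
`|x| < |y|` to one with `|y| < |x|`, and a nonzero power of `B` sends those back, because
`|x + n k y| ≥ 2 |y| - |x| > |y|` as soon as `|k| ≥ 2`.
-/

open Matrix
open scoped Pointwise

open Function Cardinal in
theorem FreeGroup.injective_lift_of_ping_pong_zpow {ι G α : Type*} [Nontrivial ι] [Group G]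
    [MulAction G α] (a : ι → G) (X : ι → Set α) (hXnonempty : ∀ i, (X i).Nonempty)
    (hXdisj : Pairwise (Disjoint on X))
    (hpp : Pairwise fun i j => ∀ n : ℤ, n ≠ 0 → a i ^ n • X j ⊆ X i) :
    Injective (FreeGroup.lift a) := by
  have hlift : FreeGroup.lift a =
      (Monoid.CoprodI.lift fun i => FreeGroup.lift fun _ => a i).comp
        freeGroupEquivCoprodI.toMonoidHom := by
    ext i
    simp
  rw [hlift, MonoidHom.coe_comp]
  refine Injective.comp ?_ freeGroupEquivCoprodI.injective
  refine Monoid.CoprodI.lift_injective_of_ping_pong _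
    (Or.inr ⟨Classical.arbitrary ι, (natCast_lt_aleph0 (n := 3)).le.trans (infinite_iff.mp inferInstance)⟩)
    X hXnonempty hXdisj fun i j hij h hh => ?_
  set n := FreeGroup.freeGroupUnitEquivInt h
  have hh' : h = FreeGroup.of () ^ n := (FreeGroup.freeGroupUnitEquivInt.symm_apply_apply h).symm
  rw [hh', map_zpow, FreeGroup.lift_apply_of]
  refine hpp hij n fun hn => hh ?_
  rw [hh', hn, zpow_zero]

theorem Units.val_zpow_eq_one_add_zsmul {R : Type*} [Ring R] (u : Rˣ)
    (hu : ((u : R) - 1) ^ 2 = 0) (n : ℤ) : ((u ^ n : Rˣ) : R) = 1 + n • ((u : R) - 1) := by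
  set N := (u : R) - 1
  have hN : N * N = 0 := by rwa [← sq]
  have hu' : (u : R) = 1 + N := by simp [N]
  have hinv : ((u⁻¹ : Rˣ) : R) = 1 - N :=
    Units.inv_eq_of_mul_eq_one_right (by simp [hu', mul_sub, add_mul, hN])
  induction n using Int.induction_on with
  | zero => simp
  | succ n ih =>
    rw [_root_.zpow_add_one, Units.val_mul, ih, hu']
    simp only [mul_add, add_mul, mul_one, one_mul, smul_mul_assoc, hN, smul_zero, add_smul, one_smul]
    abel
  | pred n ih =>
    rw [_root_.zpow_sub_one, Units.val_mul, ih, hinv]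
    simp only [mul_sub, add_mul, mul_one, one_mul, smul_mul_assoc, hN, smul_zero, sub_smul, one_smul]
    abel

theorem abs_lt_abs_add_intCast_mul {R : Type*} [CommRing R] [LinearOrder R] [IsStrictOrderedRing R]
    {x y k : R} {n : ℤ} (hxy : |x| < |y|) (hn : n ≠ 0) (hk : 2 ≤ |k|) :
    |y| < |x + n * k * y| := by
  have hn' : (1 : R) ≤ |(n : R)| := by exact_mod_cast Int.one_le_abs hn
  have hnk : 2 ≤ |(n : R)| * |k| := by nlinarith [abs_nonneg k]
  calc |y| < 2 * |y| - |x| := by linarith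
    _ ≤ |(n : R)| * |k| * |y| - |x| := by gcongr
    _ = |n * k * y| - |x| := by rw [abs_mul, abs_mul]
    _ ≤ |x + n * k * y| := add_comm x _ ▸ abs_sub_abs_le_abs_add _ _

section Unipotent

variable {R : Type*} [CommRing R] {k : R}

theorem upperUnipotent_zpow_smul (A : (Matrix (Fin 2) (Fin 2) R)ˣ)
    (hA : (A : Matrix (Fin 2) (Fin 2) R) = !![1, k; 0, 1]) (n : ℤ) (v : Fin 2 → R) :
    (A ^ n) • v = ![v 0 + n * k * v 1, v 1] := by
  have hsq : ((A : Matrix (Fin 2) (Fin 2) R) - 1) ^ 2 = 0 := by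
    rw [hA]
    ext i j; fin_cases i <;> fin_cases j <;> simp [sq, mul_apply, Fin.sum_univ_two]
  rw [Units.smul_def, Units.val_zpow_eq_one_add_zsmul A hsq, hA, one_fin_two]
  ext i; fin_cases i <;> simp [mulVec, dotProduct, Fin.sum_univ_two]

theorem lowerUnipotent_zpow_smul (B : (Matrix (Fin 2) (Fin 2) R)ˣ)
    (hB : (B : Matrix (Fin 2) (Fin 2) R) = !![1, 0; k, 1]) (n : ℤ) (v : Fin 2 → R) :
    (B ^ n) • v = ![v 0, n * k * v 0 + v 1] := by
  have hsq : ((B : Matrix (Fin 2) (Fin 2) R) - 1) ^ 2 = 0 := by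
    rw [hB]
    ext i j; fin_cases i <;> fin_cases j <;> simp [sq, mul_apply, Fin.sum_univ_two]
  rw [Units.smul_def, Units.val_zpow_eq_one_add_zsmul B hsq, hB, one_fin_two]
  ext i; fin_cases i <;> simp [mulVec, dotProduct, Fin.sum_univ_two]

end Unipotent

open Function in
theorem injective_lift_upper_lower_unipotent {R : Type*} [CommRing R] [LinearOrder R]
    [IsStrictOrderedRing R] {k : R} (hk : 2 ≤ |k|) (A B : (Matrix (Fin 2) (Fin 2) R)ˣ)
    (hA : (A : Matrix (Fin 2) (Fin 2) R) = !![1, k; 0, 1])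
    (hB : (B : Matrix (Fin 2) (Fin 2) R) = !![1, 0; k, 1]) :
    Injective (FreeGroup.lift fun b : Bool => if b then A else B) := by
  have hdisj : Disjoint {v : Fin 2 → R | |v 1| < |v 0|} {v | |v 0| < |v 1|} :=
    Set.disjoint_left.mpr fun _ h₁ h₂ => lt_asymm h₁ h₂
  refine FreeGroup.injective_lift_of_ping_pong_zpow _
    (fun b => if b then {v : Fin 2 → R | |v 1| < |v 0|} else {v | |v 0| < |v 1|}) ?_ ?_ ?_
  · rintro (_ | _)
    · exact ⟨![0, 1], by simp⟩
    · exact ⟨![1, 0], by simp⟩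
  · rintro (_ | _) (_ | _) hij <;> simp only [ne_eq, not_true_eq_false] at hij
    · exact hdisj.symm
    · exact hdisj
  · rintro (_ | _) (_ | _) hij n hn <;> simp only [ne_eq, not_true_eq_false] at hij <;>
      simp only [Set.smul_set_subset_iff, Bool.false_eq_true, if_true, if_false, Set.mem_ofPred_eq]
    · intro v hv
      rw [lowerUnipotent_zpow_smul B hB]
      simpa [add_comm] using abs_lt_abs_add_intCast_mul hv hn hk
    · intro v hv
      rw [upperUnipotent_zpow_smul A hA]
      simpa using abs_lt_abs_add_intCast_mul hv hn hk

/-- **Sanov's theorem.** The matrices `A = [[1,2],[0,1]]` and `B = [[1,0],[2,1]]` over `ℤ`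
generate a free group of rank 2: the homomorphism from the free group on two generators
sending the generators to `A` and `B` is injective. -/
theorem sanov_free_of_rank_two
    (A B : (Matrix (Fin 2) (Fin 2) ℤ)ˣ)
    (hA : (A : Matrix (Fin 2) (Fin 2) ℤ) = !![1, 2; 0, 1])
    (hB : (B : Matrix (Fin 2) (Fin 2) ℤ) = !![1, 0; 2, 1]) :
    Function.Injective ⇑(FreeGroup.lift (fun b : Bool => if b then A else B)) :=
  injective_lift_upper_lower_unipotent (by norm_num) A B hA hB
end

section
/- Every element M of the group F(ℛ) generated by M₁ and M₂ has the form M = uI + N, where u is a unit of ℛ of the form x^i y^j, and N is the 2×2 matrix with first row λ₁·(1-x, 1-y) and second row λ₂·(1-x, 1-y) for some λ₁, λ₂ ∈ ℛ satisfying λ₁(1-x) + λ₂(1-y) = 1 - u. -/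
open Matrix Finset

noncomputable section

/-- The Laurent polynomial ring `ℛ = ℤ[x, x⁻¹, y, y⁻¹]`, realized as the group
algebra of `ℤ × ℤ` over `ℤ`. -/
abbrev R2 : Type := AddMonoidAlgebra ℤ (ℤ × ℤ)

/-- The positive units `x^i y^j` of `ℛ`, as a homomorphism from `ℤ × ℤ`. -/
def U : Multiplicative (ℤ × ℤ) →* R2ˣ :=
  (Units.map (AddMonoidAlgebra.of ℤ (ℤ × ℤ))).comp toUnits.toMonoidHom

/-- `x` as a unit of `ℛ`. -/
def xu : R2ˣ := U (Multiplicative.ofAdd (1, 0))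
/-- `y` as a unit of `ℛ`. -/
def yu : R2ˣ := U (Multiplicative.ofAdd (0, 1))
/-- `x ∈ ℛ`. -/
def Xr : R2 := xu
/-- `y ∈ ℛ`. -/
def Yr : R2 := yu

/-- The augmentation map `ℛ → ℤ`, `x, y ↦ 1`. -/
def aug : R2 →+* ℤ := ((AddMonoidAlgebra.lift ℤ ℤ (ℤ × ℤ)) 1).toRingHom

/-- The augmentation ideal `Σ` of `ℛ`. -/
def Saug : Ideal R2 := RingHom.ker aug

/-- The `n`-cyclotomic ideal `𝒥(n)` of `ℛ`, generated by `1 + u + ⋯ + u^(n-1)` for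
positive units `u`. -/
def Cyc (n : ℕ) : Ideal R2 :=
  Ideal.span {r | ∃ m : Multiplicative (ℤ × ℤ), r = ∑ i ∈ Finset.range n, ((U m : R2)) ^ i}

/-- The matrix `M₁`. -/
def M1 : Matrix (Fin 2) (Fin 2) R2 := !![1, 1 - Yr; 0, Xr]
/-- The matrix `M₂`. -/
def M2 : Matrix (Fin 2) (Fin 2) R2 := !![Yr, 0; 1 - Xr, 1]

/-- The matrix `[λᵢ v]` with rows `λᵢ • (1-x, 1-y)`. -/
def Nmat (a b : R2) : Matrix (Fin 2) (Fin 2) R2 :=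
  !![a * (1 - Xr), a * (1 - Yr); b * (1 - Xr), b * (1 - Yr)]

/-- The row vector `v = (1-x, 1-y)`. -/
def vv : Fin 2 → R2 := ![1 - Xr, 1 - Yr]

end

/-! The matrices `u • 1 + l vᵀ` with `v ⬝ᵥ l = 1 - u` form a group for any row vector `v`:
`(u • 1 + l vᵀ) (u' • 1 + l' vᵀ) = u u' • 1 + (l + u l') vᵀ`, and the inverse of `u • 1 + l vᵀ` is
`u⁻¹ • 1 - u⁻¹ l vᵀ`. For `v = (1 - x, 1 - y)` this group contains `M₁ = x • 1 + (1, 0)ᵀ v` and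
`M₂ = y • 1 + (0, 1)ᵀ v`, hence all of `F(ℛ)`, and its scalars `u` stay in the group generated
by `x` and `y`. -/

namespace Matrix

variable {n R : Type*} [Fintype n] [DecidableEq n] [CommRing R]

theorem smul_one_add_vecMulVec_mul_smul_one_add_vecMulVec {u u' : R} {l l' v : n → R}
    (h' : v ⬝ᵥ l' = 1 - u') :
    (u • 1 + vecMulVec l v) * (u' • 1 + vecMulVec l' v) =
      (u * u') • 1 + vecMulVec (l + u • l') v := by
  simp only [add_mul, mul_add, Matrix.smul_mul, Matrix.mul_smul, one_mul, mul_one,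
    vecMulVec_mul_vecMulVec, h', vecMulVec_smul, add_vecMulVec, smul_vecMulVec]
  module

/-- The constraint `v ⬝ᵥ l = 1 - u` gives `v ᵥ* M = v`, which is what makes this set closed under
products. -/
def scalarAddVecMulVecSubgroup (S : Subgroup Rˣ) (v : n → R) : Subgroup (Matrix n n R)ˣ where
  carrier := {M | ∃ u ∈ S, ∃ l : n → R,
    (M : Matrix n n R) = (u : R) • 1 + vecMulVec l v ∧ v ⬝ᵥ l = 1 - u}
  one_mem' := ⟨1, S.one_mem, 0, by simp, by simp⟩
  mul_mem' := by
    rintro M M' ⟨u, hu, l, hM, hl⟩ ⟨u', hu', l', hM', hl'⟩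
    refine ⟨u * u', S.mul_mem hu hu', l + (u : R) • l', ?_, ?_⟩
    · rw [Units.val_mul, hM, hM', smul_one_add_vecMulVec_mul_smul_one_add_vecMulVec hl',
        Units.val_mul]
    · rw [dotProduct_add, dotProduct_smul, hl, hl', smul_eq_mul, Units.val_mul]
      ring
  inv_mem' := by
    rintro M ⟨u, hu, l, hM, hl⟩
    refine ⟨u⁻¹, S.inv_mem hu, -(↑u⁻¹ : R) • l, ?_, ?_⟩
    · refine Units.inv_eq_of_mul_eq_one_left ?_
      rw [hM, smul_one_add_vecMulVec_mul_smul_one_add_vecMulVec hl, Units.inv_mul, neg_smul,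
        neg_add_cancel, zero_vecMulVec, one_smul, add_zero]
    · rw [dotProduct_smul, hl, smul_eq_mul]
      linear_combination u.inv_mul

end Matrix

theorem vecMulVec_vv (l : Fin 2 → R2) : vecMulVec l vv = Nmat (l 0) (l 1) := by
  ext i j
  fin_cases i <;> fin_cases j <;> rfl

theorem vv_dotProduct (l : Fin 2 → R2) : vv ⬝ᵥ l = l 0 * (1 - Xr) + l 1 * (1 - Yr) := by
  simp [vv, dotProduct, Fin.sum_univ_two, mul_comm]

theorem M1_eq_smul_one_add_vecMulVec : M1 = (xu : R2) • 1 + vecMulVec ![1, 0] vv := by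
  rw [vecMulVec_vv]
  ext i j
  fin_cases i <;> fin_cases j <;> simp [M1, Nmat, Xr]

theorem M2_eq_smul_one_add_vecMulVec : M2 = (yu : R2) • 1 + vecMulVec ![0, 1] vv := by
  rw [vecMulVec_vv]
  ext i j
  fin_cases i <;> fin_cases j <;> simp [M2, Nmat, Yr]

/-- Every element `M` of `F(ℛ) = ⟨M₁, M₂⟩` has the form `M = uI + N` with `u = x^i y^j`
a positive unit and `N = [λᵢ v]`, where `λ₁(1-x) + λ₂(1-y) = 1 - u`. -/
theorem normal_form
    (m1 m2 : (Matrix (Fin 2) (Fin 2) R2)ˣ)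
    (h1 : (m1 : Matrix (Fin 2) (Fin 2) R2) = M1)
    (h2 : (m2 : Matrix (Fin 2) (Fin 2) R2) = M2) :
    ∀ M ∈ Subgroup.closure {m1, m2}, ∃ (i j : ℤ) (l1 l2 : R2),
      (M : Matrix (Fin 2) (Fin 2) R2) =
        ((xu ^ i * yu ^ j : R2ˣ) : R2) • (1 : Matrix (Fin 2) (Fin 2) R2) + Nmat l1 l2 ∧
      l1 * (1 - Xr) + l2 * (1 - Yr) = 1 - ((xu ^ i * yu ^ j : R2ˣ) : R2) := by
  set F := scalarAddVecMulVecSubgroup (Subgroup.closure {xu, yu}) vv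
  have hm1 : m1 ∈ F := ⟨xu, Subgroup.subset_closure (by simp), ![1, 0],
    by rw [h1, M1_eq_smul_one_add_vecMulVec], by simp [vv, Xr]⟩
  have hm2 : m2 ∈ F := ⟨yu, Subgroup.subset_closure (by simp), ![0, 1],
    by rw [h2, M2_eq_smul_one_add_vecMulVec], by simp [vv, Yr]⟩
  intro M hM
  obtain ⟨u, hu, l, hMu, hl⟩ :=
    (Subgroup.closure_le F).mpr (Set.insert_subset hm1 (Set.singleton_subset_iff.mpr hm2)) hM
  obtain ⟨i, j, rfl⟩ := Subgroup.mem_closure_pair.mp hu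
  exact ⟨i, j, l 0, l 1, by rw [hMu, vecMulVec_vv], by rw [← vv_dotProduct, hl]⟩
end

section
/- If M = uI + N lies in the commutator subgroup of F(ℛ), then u = 1 and λ₁(1-x) + λ₂(1-y) = 0, where N has rows λᵢ·(1-x, 1-y); consequently λ₁ and λ₂ both lie in the augmentation ideal Σ of ℛ. -/
/-! Both generators fix the row vector `v = (1-x, 1-y)` under right multiplication, and every
commutator has determinant `1`. For `M = uI + λ v` (with `λ = (λ₁, λ₂)` a column) one has
`v M = (u + λ·v) v` and `det M = u (u + λ·v)`; as `ℛ` is a domain the first identity gives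
`u + λ·v = 1`, and then the second gives `u = 1`, so `λ·v = 0`. Finally, the specialisation
`y ↦ 1` preserves the augmentation and turns `λ₁(1-x) + λ₂(1-y) = 0` into `λ₁(1-x) = 0` in a
domain, so `λ₁` has augmentation `0`; symmetrically for `λ₂` with `x ↦ 1`. -/

open Matrix Finset

namespace Matrix

variable {n R : Type*} [Fintype n] [DecidableEq n] [CommRing R]

def vecMulStabilizer (v : n → R) : Subgroup (GL n R) where
  carrier := {g | v ᵥ* (g : Matrix n n R) = v}
  one_mem' := vecMul_one v
  mul_mem' {g h} (hg : v ᵥ* _ = v) (hh : v ᵥ* _ = v) := by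
    change v ᵥ* ((g * h : GL n R) : Matrix n n R) = v
    rw [Units.val_mul, ← vecMul_vecMul, hg, hh]
  inv_mem' {g} (hg : v ᵥ* _ = v) :=
    calc v ᵥ* ((g⁻¹ : GL n R) : Matrix n n R)
        = v ᵥ* (g : Matrix n n R) ᵥ* ((g⁻¹ : GL n R) : Matrix n n R) := by rw [hg]
      _ = v := by rw [vecMul_vecMul, ← Units.val_mul, mul_inv_cancel, Units.val_one, vecMul_one]

theorem mem_vecMulStabilizer {v : n → R} {g : GL n R} :
    g ∈ vecMulStabilizer v ↔ v ᵥ* (g : Matrix n n R) = v :=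
  Iff.rfl

theorem det_eq_one_of_mem_commutator {H K : Subgroup (GL n R)} {g : GL n R}
    (hg : g ∈ ⁅H, K⁆) : (g : Matrix n n R).det = 1 := by
  have hker := Abelianization.commutator_subset_ker (GeneralLinearGroup.det : GL n R →* Rˣ)
  rw [← GeneralLinearGroup.val_det_apply, hker (Subgroup.commutator_mono le_top le_top hg),
    Units.val_one]

theorem vecMul_smul_one_add_vecMulVec (u : R) (a b : n → R) :
    b ᵥ* (u • 1 + vecMulVec a b) = (u + a ⬝ᵥ b) • b := by
  rw [vecMul_add, vecMul_smul, vecMul_one, vecMul_vecMulVec, dotProduct_comm, add_smul]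

theorem det_smul_one_add_vecMulVec_fin_two (u : R) (a b : Fin 2 → R) :
    (u • 1 + vecMulVec a b).det = u * (u + a ⬝ᵥ b) := by
  simp only [det_fin_two, add_apply, smul_apply, smul_eq_mul, vecMulVec_apply, dotProduct,
    Fin.sum_univ_two, one_apply_eq, one_apply_ne zero_ne_one, one_apply_ne one_ne_zero]
  ring

theorem eq_one_and_dotProduct_eq_zero_of_det_eq_one [IsDomain R] {u : R} {a b : Fin 2 → R}
    (hb : b ≠ 0) (hfix : b ᵥ* (u • 1 + vecMulVec a b) = b)
    (hdet : (u • 1 + vecMulVec a b).det = 1) : u = 1 ∧ a ⬝ᵥ b = 0 := by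
  have hsum : u + a ⬝ᵥ b = 1 := by
    apply smul_left_injective R hb
    simpa only [one_smul, vecMul_smul_one_add_vecMulVec] using hfix
  rw [det_smul_one_add_vecMulVec_fin_two, hsum, mul_one] at hdet
  exact ⟨hdet, by linear_combination hsum - hdet⟩

end Matrix

open AddMonoidAlgebra

theorem Xr_eq_single : Xr = single (1, 0) 1 := by
  simp [Xr, xu, U]

theorem Yr_eq_single : Yr = single (0, 1) 1 := by
  simp [Yr, yu, U]

theorem one_sub_Xr_ne_zero : (1 - Xr : R2) ≠ 0 := by
  simp [sub_eq_zero, Xr_eq_single, one_def, single_inj, Prod.ext_iff]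

theorem one_sub_Yr_ne_zero : (1 - Yr : R2) ≠ 0 := by
  simp [sub_eq_zero, Yr_eq_single, one_def, single_inj, Prod.ext_iff]

theorem vv_vecMul_M1 : vv ᵥ* M1 = vv := by
  funext j
  fin_cases j <;>
    simp only [vecMul, dotProduct, vv, M1, Fin.sum_univ_two, Fin.zero_eta, Fin.mk_one, of_apply,
      cons_val', cons_val_zero, cons_val_one, cons_val_fin_one] <;>
    ring

theorem vv_vecMul_M2 : vv ᵥ* M2 = vv := by
  funext j
  fin_cases j <;>
    simp only [vecMul, dotProduct, vv, M2, Fin.sum_univ_two, Fin.zero_eta, Fin.mk_one, of_apply,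
      cons_val', cons_val_zero, cons_val_one, cons_val_fin_one] <;>
    ring

theorem Nmat_eq_vecMulVec (a b : R2) : Nmat a b = vecMulVec ![a, b] vv := by
  ext i j; fin_cases i <;> fin_cases j <;> rfl

theorem aug_single (g : ℤ × ℤ) (c : ℤ) : aug (single g c) = c := by
  simp [aug]

theorem aug_mapDomain (f : ℤ × ℤ →+ ℤ × ℤ) (r : R2) : aug (mapDomain f r) = aug r := by
  rw [← mapDomainRingHom_apply, ← RingHom.comp_apply]
  congr 1
  refine ringHom_ext (fun c => ?_) (fun g => ?_) <;> simp [aug_single]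

theorem mem_Saug_of_mul_add_mul_eq_zero (f : ℤ × ℤ →+ ℤ × ℤ) {a b c d : R2}
    (h : a * c + b * d = 0) (hc : mapDomain f c ≠ 0) (hd : mapDomain f d = 0) : a ∈ Saug := by
  have hφ := congrArg (mapDomainRingHom ℤ f) h
  simp only [map_add, map_mul, map_zero, mapDomainRingHom_apply, hd, mul_zero, add_zero] at hφ
  change aug a = 0
  rw [← aug_mapDomain f, (mul_eq_zero.mp hφ).resolve_right hc, map_zero]

theorem mapDomain_one_sub_single (f : ℤ × ℤ →+ ℤ × ℤ) (g : ℤ × ℤ) :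
    mapDomain f (1 - single g 1 : R2) = 1 - single (f g) 1 := by
  rw [← mapDomainRingHom_apply, map_sub, map_one, mapDomainRingHom_apply, mapDomain_single]

theorem mem_Saug_of_mul_one_sub_Xr_add_mul_one_sub_Yr_eq_zero {a b : R2}
    (h : a * (1 - Xr) + b * (1 - Yr) = 0) : a ∈ Saug ∧ b ∈ Saug := by
  rw [Xr_eq_single, Yr_eq_single] at h
  constructor
  · refine mem_Saug_of_mul_add_mul_eq_zero
      ((AddMonoidHom.inl ℤ ℤ).comp (AddMonoidHom.fst ℤ ℤ)) h ?_ ?_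
    · rw [mapDomain_one_sub_single]; simpa [← Xr_eq_single] using one_sub_Xr_ne_zero
    · rw [mapDomain_one_sub_single]; simp [one_def, Prod.mk_zero_zero]
  · refine mem_Saug_of_mul_add_mul_eq_zero
      ((AddMonoidHom.inr ℤ ℤ).comp (AddMonoidHom.snd ℤ ℤ)) ((add_comm _ _).trans h) ?_ ?_
    · rw [mapDomain_one_sub_single]; simpa [← Yr_eq_single] using one_sub_Yr_ne_zero
    · rw [mapDomain_one_sub_single]; simp [one_def, Prod.mk_zero_zero]

/-- If `M = uI + N` lies in the commutator subgroup of `F(ℛ)`, then `u = 1` and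
`λ₁(1-x) + λ₂(1-y) = 0`; consequently `λ₁, λ₂` lie in the augmentation ideal `Σ`. -/
theorem commutator_subgroup_form
    (m1 m2 : (Matrix (Fin 2) (Fin 2) R2)ˣ)
    (h1 : (m1 : Matrix (Fin 2) (Fin 2) R2) = M1)
    (h2 : (m2 : Matrix (Fin 2) (Fin 2) R2) = M2)
    (M : (Matrix (Fin 2) (Fin 2) R2)ˣ)
    (hM : M ∈ ⁅Subgroup.closure {m1, m2}, Subgroup.closure {m1, m2}⁆)
    (u : R2ˣ) (l1 l2 : R2)
    (hform : (M : Matrix (Fin 2) (Fin 2) R2) =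
      (u : R2) • (1 : Matrix (Fin 2) (Fin 2) R2) + Nmat l1 l2) :
    (u : R2) = 1 ∧ l1 * (1 - Xr) + l2 * (1 - Yr) = 0 ∧ l1 ∈ Saug ∧ l2 ∈ Saug := by
  have hgen : Subgroup.closure {m1, m2} ≤ vecMulStabilizer vv := by
    rw [Subgroup.closure_le]
    rintro g (rfl | rfl)
    · exact mem_vecMulStabilizer.mpr (h1 ▸ vv_vecMul_M1)
    · exact mem_vecMulStabilizer.mpr (h2 ▸ vv_vecMul_M2)
  have hfix : vv ᵥ* (M : Matrix (Fin 2) (Fin 2) R2) = vv :=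
    hgen (Subgroup.commutator_le_self _ hM)
  have hdet := det_eq_one_of_mem_commutator hM
  rw [hform, Nmat_eq_vecMulVec] at hfix hdet
  have hvv : vv ≠ 0 := fun h => one_sub_Xr_ne_zero (congrFun h 0)
  obtain ⟨hu, hs⟩ := eq_one_and_dotProduct_eq_zero_of_det_eq_one hvv hfix hdet
  have hrel : l1 * (1 - Xr) + l2 * (1 - Yr) = 0 := by
    simpa [dotProduct, Fin.sum_univ_two, vv] using hs
  exact ⟨hu, hrel, mem_Saug_of_mul_one_sub_Xr_add_mul_one_sub_Yr_eq_zero hrel⟩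
end

section
/- For a prime p, the p-cyclotomic element 1 + u + u² + ⋯ + u^{p-1} is congruent to (1-u)^{p-1} modulo p in ℛ for any unit u; consequently the (p-1)-st power of the augmentation ideal Σ^{p-1} is contained in the ideal generated by 𝒥(p) and pΣ, where 𝒥(p) is the p-cyclotomic ideal. -/
open Matrix Finset

/-! Modulo `p`, `(1 - u)(1 + u + ⋯ + u^(p-1)) = 1 - u^p ≡ (1 - u)^p`; cancelling `1 - X` in
`𝔽_p[X]` gives the congruence as a polynomial identity. Since `p = 1 + 1 + ⋯ + 1 ∈ 𝒥(p)`, it puts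
`(1 - u)^(p-1)` in `𝒥(p)` for every monomial `u`, so `Σ = (1 - x, 1 - y)` is nilpotent modulo
`𝒥(p)`. For `k = 0, …, p-1` we have `1 - x^k y ≡ k(1 - x) + (1 - y) mod Σ²`, so
`(k(1 - x) + (1 - y))^(p-1) ∈ 𝒥(p) + Σ^p`. Inverting this Vandermonde system, whose determinant
and binomial weights are prime to `p`, puts every monomial of degree `p - 1` in `1 - x, 1 - y` into
`𝒥(p) + Σ^p`, i.e. `Σ^(p-1) ⊆ 𝒥(p) + Σ · Σ^(p-1)`; nilpotency of `Σ` then gives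
`Σ^(p-1) ⊆ 𝒥(p)`. -/

open Pointwise

open Polynomial in
theorem Polynomial.geom_sum_X_eq_one_sub_X_pow_sub_one (p : ℕ) [Fact p.Prime] :
    ∑ i ∈ range p, (X : (ZMod p)[X]) ^ i = (1 - X) ^ (p - 1) := by
  have hX : (1 - X : (ZMod p)[X]) ≠ 0 := by
    rw [← neg_sub, neg_ne_zero, ← C_1]
    exact X_sub_C_ne_zero 1
  apply mul_left_cancel₀ hX
  rw [← pow_succ', Nat.sub_add_cancel (Fact.out : p.Prime).one_le, sub_pow_char, one_pow,
    mul_comm, ← neg_sub, ← neg_sub (X ^ p), mul_neg, geom_sum_mul]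

open Polynomial in
theorem geom_sum_sub_one_sub_pow_mem_span {T : Type*} [CommRing T] {p : ℕ} (hp : p.Prime)
    (u : T) : ∑ i ∈ range p, u ^ i - (1 - u) ^ (p - 1) ∈ Ideal.span {(p : T)} := by
  have : Fact p.Prime := ⟨hp⟩
  set f : ℤ[X] := ∑ i ∈ range p, X ^ i - (1 - X) ^ (p - 1)
  have hf : f ∈ (Ideal.span {(p : ℤ)}).map (C : ℤ →+* ℤ[X]) := by
    rw [← ZMod.ker_intCastRingHom, ← ker_mapRingHom, RingHom.mem_ker]
    simp [f, Polynomial.map_sum, geom_sum_X_eq_one_sub_X_pow_sub_one]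
  simpa [f, Ideal.map_map, Ideal.map_span] using Ideal.mem_map_of_mem (aeval u).toRingHom hf

theorem Nat.Prime.coprime_superFactorial_of_lt {p n : ℕ} (hp : p.Prime) (hn : n < p) :
    p.Coprime n.superFactorial := by
  induction n with
  | zero => simp
  | succ n ih =>
    rw [Nat.superFactorial_succ]
    exact (hp.coprime_factorial_of_lt hn).mul_right (ih (by omega))

theorem Set.mem_pair_pow {M : Type*} [CommMonoid M] {a b x : M} {n : ℕ}
    (hx : x ∈ ({a, b} : Set M) ^ n) : ∃ i ≤ n, x = a ^ i * b ^ (n - i) := by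
  induction n generalizing x with
  | zero => exact ⟨0, le_rfl, by simpa using hx⟩
  | succ n ih =>
    obtain ⟨y, hy, z, hz, rfl⟩ := Set.mem_mul.mp (pow_succ ({a, b} : Set M) n ▸ hx)
    obtain ⟨i, hi, rfl⟩ := ih hy
    rcases hz with rfl | rfl
    · exact ⟨i + 1, by omega, by rw [Nat.succ_sub_succ, pow_succ, mul_right_comm]⟩
    · exact ⟨i, by omega, by rw [Nat.sub_add_comm hi, pow_succ, mul_assoc]⟩

namespace Ideal

variable {T : Type*} [CommRing T]

theorem span_pair_pow_le {a b : T} {L : Ideal T} {n : ℕ}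
    (h : ∀ i ≤ n, a ^ i * b ^ (n - i) ∈ L) : span {a, b} ^ n ≤ L := by
  rw [span, Submodule.span_pow, ← span, span_le]
  intro x hx
  obtain ⟨i, hi, rfl⟩ := Set.mem_pair_pow hx
  exact h i hi

theorem pow_sub_pow_mem_pow_succ {I : Ideal T} {s t : T} (ht : t ∈ I) (hst : s - t ∈ I ^ 2)
    (n : ℕ) : s ^ n - t ^ n ∈ I ^ (n + 1) := by
  have hs : s ∈ I := by simpa using I.add_mem (pow_le_self two_ne_zero hst) ht
  rcases n with _ | n
  · simp
  have hterm : ∀ i ∈ range (n + 1), s ^ i * t ^ (n + 1 - 1 - i) ∈ I ^ n := fun i hi => by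
    have := mul_mem_mul (pow_mem_pow hs i) (pow_mem_pow ht (n - i))
    rwa [← pow_add, Nat.add_sub_cancel' (Nat.lt_succ_iff.mp (mem_range.mp hi))] at this
  rw [← geom_sum₂_mul, pow_add I n 2]
  exact mul_mem_mul (_root_.sum_mem hterm) hst

theorem mem_of_coprime_natCast_mul_mem {L : Ideal T} {c p : ℕ} (hcp : c.Coprime p)
    (hp : (p : T) ∈ L) {x : T} (hx : (c : T) * x ∈ L) : x ∈ L := by
  obtain ⟨α, β, h⟩ := Nat.isCoprime_iff_coprime.mpr hcp
  have hx' : x = α * ((c : T) * x) + β * x * p := by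
    have := congrArg (fun z : ℤ => (z : T) * x) h
    push_cast at this
    linear_combination -this
  rw [hx']
  exact L.add_mem (L.mul_mem_left _ hx) (L.mul_mem_left _ hp)

/-- The adjugate of the Vandermonde matrix `(k ^ l)_{k, l ≤ n}`, whose determinant is the
superfactorial of `n`, recovers the binomial terms of `(k a + b) ^ n`. -/
theorem superFactorial_mul_choose_mul_mem {L : Ideal T} {a b : T} {n : ℕ}
    (h : ∀ k ≤ n, ((k : T) * a + b) ^ n ∈ L) {i : ℕ} (hi : i ≤ n) :
    ((n.superFactorial * n.choose i : ℕ) : T) * (a ^ i * b ^ (n - i)) ∈ L := by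
  let V := vandermonde fun k : Fin (n + 1) => ((k : ℕ) : T)
  let m : Fin (n + 1) → T := fun l => (n.choose l : T) * (a ^ (l : ℕ) * b ^ (n - l))
  have hVm : ∀ k, (V *ᵥ m) k ∈ L := fun k => by
    convert h k (Nat.lt_succ_iff.mp k.isLt) using 1
    rw [add_pow, ← Fin.sum_univ_eq_sum_range]
    simp only [mulVec, dotProduct, V, m, vandermonde_apply]
    exact sum_congr rfl fun l _ => by ring
  have hdet : V.det • m = V.adjugate *ᵥ (V *ᵥ m) := by
    rw [mulVec_mulVec, adjugate_mul, smul_mulVec, one_mulVec]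
  have hi' := congrFun hdet ⟨i, Nat.lt_succ_iff.mpr hi⟩
  rw [Pi.smul_apply, smul_eq_mul, det_vandermonde_id_eq_superFactorial] at hi'
  rw [Nat.cast_mul, mul_assoc, hi', mulVec, dotProduct]
  exact _root_.sum_mem fun k _ => L.mul_mem_left _ (hVm k)

theorem le_of_le_sup_mul_of_pow_le {I J K : Ideal T} (h : J ≤ K ⊔ I * J) {N : ℕ}
    (hN : I ^ N ≤ K) : J ≤ K := by
  have hpow : ∀ n, J ≤ K ⊔ I ^ n * J := by
    intro n
    induction n with
    | zero => simp
    | succ n ih =>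
      calc J ≤ K ⊔ I ^ n * (K ⊔ I * J) := ih.trans (sup_le_sup_left (mul_mono_right h) _)
        _ ≤ K ⊔ I ^ (n + 1) * J := by
          rw [mul_sup, ← mul_assoc, ← pow_succ, ← sup_assoc]
          exact sup_le_sup_right (sup_le le_rfl mul_le_right) _
  exact (hpow N).trans (sup_le le_rfl (mul_le_left.trans hN))

end Ideal

theorem aug_U (m : Multiplicative (ℤ × ℤ)) : aug (U m : R2) = 1 := by
  simp [aug, U]

theorem aug_single_s10 (m : ℤ × ℤ) (r : ℤ) : aug (AddMonoidAlgebra.single m r) = r := by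
  simp [aug]

theorem single_eq_intCast_mul_U (m : ℤ × ℤ) (r : ℤ) :
    AddMonoidAlgebra.single m r = (r : R2) * U (.ofAdd m) := by
  simp [U, AddMonoidAlgebra.of_apply, AddMonoidAlgebra.intCast_def,
    AddMonoidAlgebra.single_mul_single]

theorem X_pow_mul_Y_eq_U (k : ℕ) :
    Xr ^ k * Yr = U (.ofAdd (1, 0) ^ k * .ofAdd (0, 1)) := by
  simp [Xr, Yr, xu, yu]

theorem one_sub_U_mem_Saug (m : Multiplicative (ℤ × ℤ)) : 1 - (U m : R2) ∈ Saug := by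
  simp [Saug, RingHom.mem_ker, aug_U]

/-- `m ↦ U m` modulo `(1 - x, 1 - y)` is a group homomorphism that is trivial on the generators. -/
theorem one_sub_U_mem_span (m : Multiplicative (ℤ × ℤ)) :
    1 - (U m : R2) ∈ Ideal.span {1 - Xr, 1 - Yr} := by
  set I := Ideal.span {1 - Xr, 1 - Yr}
  let φ := (Units.map (Ideal.Quotient.mk I : R2 →* R2 ⧸ I)).comp U
  have hφ : ∀ g, φ g = 1 ↔ 1 - (U g : R2) ∈ I := fun g => by
    rw [Units.ext_iff, ← neg_mem_iff, neg_sub, ← Ideal.Quotient.eq]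
    rfl
  have hm : m = .ofAdd (1, 0) ^ m.toAdd.1 * .ofAdd (0, 1) ^ m.toAdd.2 := by
    apply Multiplicative.toAdd.injective
    simp
  rw [← hφ, hm, map_mul, map_zpow, map_zpow, (hφ _).mpr (Ideal.subset_span (Or.inl rfl)),
    (hφ _).mpr (Ideal.subset_span (Or.inr rfl)), _root_.one_zpow, _root_.one_zpow, one_mul]

theorem Saug_eq_span : Saug = Ideal.span {1 - Xr, 1 - Yr} := by
  refine le_antisymm (fun f hf => ?_) (Ideal.span_le.mpr ?_)
  · have hsub : ∀ g : R2, g - (aug g : R2) ∈ Ideal.span {1 - Xr, 1 - Yr} := fun g => by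
      induction g using AddMonoidAlgebra.induction_linear with
      | zero => simp
      | add f g hf hg => simpa [add_sub_add_comm] using add_mem hf hg
      | single m r =>
        rw [aug_single_s10, single_eq_intCast_mul_U, ← neg_mem_iff]
        simpa [mul_sub] using Ideal.mul_mem_left _ (r : R2) (one_sub_U_mem_span (.ofAdd m))
    simpa [RingHom.mem_ker.mp hf] using hsub f
  · rintro _ (rfl | rfl) <;> exact one_sub_U_mem_Saug _

theorem one_sub_X_pow_mul_Y_sub_mem_Saug_sq (k : ℕ) :
    (1 - Xr ^ k * Yr) - (k * (1 - Xr) + (1 - Yr)) ∈ Saug ^ 2 := by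
  induction k with
  | zero => simp
  | succ k ih =>
    have hsq : (1 - Xr) * (1 - Xr ^ k * Yr) ∈ Saug ^ 2 := by
      rw [pow_two, X_pow_mul_Y_eq_U]
      exact Ideal.mul_mem_mul (one_sub_U_mem_Saug _) (one_sub_U_mem_Saug _)
    convert sub_mem ih hsq using 1
    push_cast
    ring

theorem natCast_mem_Cyc (p : ℕ) : (p : R2) ∈ Cyc p :=
  Ideal.subset_span ⟨1, by simp⟩

theorem one_sub_U_pow_mem_Cyc {p : ℕ} (hp : p.Prime) (m : Multiplicative (ℤ × ℤ)) :
    (1 - (U m : R2)) ^ (p - 1) ∈ Cyc p := by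
  have hgeom : ∑ i ∈ range p, (U m : R2) ^ i ∈ Cyc p := Ideal.subset_span ⟨m, rfl⟩
  have hdiff := (Ideal.span_singleton_le_iff_mem _).mpr (natCast_mem_Cyc p)
    (geom_sum_sub_one_sub_pow_mem_span hp (U m : R2))
  simpa using sub_mem hgeom hdiff

theorem Saug_le_radical_Cyc {p : ℕ} (hp : p.Prime) : Saug ≤ (Cyc p).radical := by
  rw [Saug_eq_span, Ideal.span_le]
  rintro _ (rfl | rfl) <;> exact ⟨p - 1, one_sub_U_pow_mem_Cyc hp _⟩

theorem Saug_pow_le_sup_mul {p : ℕ} (hp : p.Prime) :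
    Saug ^ (p - 1) ≤ Cyc p ⊔ Saug * Saug ^ (p - 1) := by
  have hp1 : p - 1 < p := Nat.sub_lt hp.pos one_pos
  rw [← pow_succ', Nat.sub_add_cancel hp.one_le]
  conv_lhs => rw [Saug_eq_span]
  refine Ideal.span_pair_pow_le fun i hi => ?_
  refine Ideal.mem_of_coprime_natCast_mul_mem ?_ (Ideal.mem_sup_left (natCast_mem_Cyc p))
    (Ideal.superFactorial_mul_choose_mul_mem (fun k _ => ?_) hi)
  · exact (hp.coprime_superFactorial_of_lt hp1).symm.mul_left (hp.coprime_choose_of_lt hp1 hi).symm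
  have hlin : (k : R2) * (1 - Xr) + (1 - Yr) ∈ Saug :=
    add_mem (Ideal.mul_mem_left _ _ (one_sub_U_mem_Saug _)) (one_sub_U_mem_Saug _)
  have happrox :=
    Ideal.pow_sub_pow_mem_pow_succ hlin (one_sub_X_pow_mul_Y_sub_mem_Saug_sq k) (p - 1)
  rw [Nat.sub_add_cancel hp.one_le] at happrox
  have hunit : (1 - Xr ^ k * Yr) ^ (p - 1) ∈ Cyc p := by
    rw [X_pow_mul_Y_eq_U]
    exact one_sub_U_pow_mem_Cyc hp _
  simpa using sub_mem (Ideal.mem_sup_left hunit) (Ideal.mem_sup_right happrox)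

theorem Saug_pow_le_Cyc {p : ℕ} (hp : p.Prime) : Saug ^ (p - 1) ≤ Cyc p := by
  obtain ⟨N, hN⟩ := Ideal.exists_pow_le_of_le_radical_of_fg (Saug_le_radical_Cyc hp)
    (Saug_eq_span ▸ Submodule.fg_span (Set.toFinite _))
  exact Ideal.le_of_le_sup_mul_of_pow_le (Saug_pow_le_sup_mul hp) hN

/-- For a prime `p`, the `p`-cyclotomic element `1 + u + ⋯ + u^(p-1)` is congruent to
`(1-u)^(p-1)` modulo `p` for any unit `u`; consequently
`Σ^(p-1) ⊆ 𝒥(p) + pΣ`. -/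
theorem cyclotomic_mod_p (p : ℕ) (hp : p.Prime) :
    (∀ u : R2, IsUnit u →
      (∑ i ∈ Finset.range p, u ^ i) - (1 - u) ^ (p - 1) ∈ Ideal.span {(p : R2)}) ∧
    Saug ^ (p - 1) ≤ Cyc p ⊔ Ideal.span {(p : R2)} * Saug :=
  ⟨fun u _ => geom_sum_sub_one_sub_pow_mem_span hp u, (Saug_pow_le_Cyc hp).trans le_sup_left⟩
end

section
/- If g is in the commutator subgroup of F(ℛ[t,t⁻¹]) = ⟨M₁, M₂T⟩ and g = M_g + Σᵢ≥₁ (t-1)ⁱAᵢ is its expansion in powers of (t-1), then every coefficient matrix Aᵢ has all entries in the augmentation ideal Σ of ℛ. -/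
open Matrix Finset

/-- The ring `ℛ[t, t⁻¹]`, as Laurent polynomials over `ℛ`. -/
abbrev RT : Type := LaurentPolynomial R2

noncomputable section

/-- `x ∈ ℛ[t, t⁻¹]`. -/
def Xt : RT := LaurentPolynomial.C Xr
/-- `y ∈ ℛ[t, t⁻¹]`. -/
def Yt : RT := LaurentPolynomial.C Yr
/-- `t ∈ ℛ[t, t⁻¹]`. -/
def tL : RT := LaurentPolynomial.T 1

/-- The matrix `M₁` over `ℛ[t, t⁻¹]`. -/
def M1T : Matrix (Fin 2) (Fin 2) RT := !![1, 1 - Yt; 0, Xt]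
/-- The matrix `M₂` over `ℛ[t, t⁻¹]`. -/
def M2T : Matrix (Fin 2) (Fin 2) RT := !![Yt, 0; 1 - Xt, 1]
/-- The matrix `T`. -/
def Tm : Matrix (Fin 2) (Fin 2) RT := !![tL, 0; 1 - tL, 1]

/-- `t = 1 + (t - 1)` as a unit of the power series ring `ℛ[[t-1]]`
(whose variable `X` plays the role of `t - 1`). -/
def uPS : (PowerSeries R2)ˣ :=
  ((PowerSeries.isUnit_iff_constantCoeff (φ := 1 + PowerSeries.X)).mpr (by simp)).unit

/-- The power series expansion `ℛ[t, t⁻¹] → ℛ[[t-1]]`, the ring homomorphism sending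
`t` to `1 + X` (where `X` stands for `t - 1`); the coefficient of `X^i` in the image of
`f` is the coefficient `Aᵢ` of `(t-1)^i` in the expansion of `f` in powers of `t - 1`. -/
def phi : RT →+* PowerSeries R2 :=
  ((AddMonoidAlgebra.lift R2 (PowerSeries R2) ℤ)
    ((Units.coeHom (PowerSeries R2)).comp (zpowersHom (PowerSeries R2)ˣ uPS))).toRingHom

/-- The derived series of a subgroup `H` of an ambient group, as subgroups of the
ambient group: `derivedSub H 0 = H`, `derivedSub H (k+1) = [derivedSub H k, derivedSub H k]`. -/
def derivedSub {G : Type*} [Group G] (H : Subgroup G) : ℕ → Subgroup G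
  | 0 => H
  | k + 1 => ⁅derivedSub H k, derivedSub H k⁆

end

/-
The substitution `x, y ↦ 1` followed by the expansion in powers of `t - 1` is a ring
homomorphism `ℛ[t, t⁻¹] → ℤ[[t - 1]]`. It sends `M₁` to the identity, so the image of
`⟨M₁, M₂T⟩` is generated by a single matrix and hence abelian: every commutator maps to
the identity matrix, whose entries have no terms of positive degree in `t - 1`.
-/

theorem Subgroup.commutator_closure_pair_le_ker {G H : Type*} [Group G] [Group H]
    (f : G →* H) {a : G} (ha : f a = 1) (b : G) :
    ⁅closure {a, b}, closure {a, b}⁆ ≤ f.ker := by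
  rw [← MonoidHom.comap_bot, ← map_le_iff_le_comap, map_commutator, MonoidHom.map_closure,
    Set.image_pair, ha, closure_insert_one, ← zpowers_eq_closure,
    commutator_self_eq_bot_iff.mpr inferInstance]

noncomputable section

def augExpansion : RT →+* PowerSeries ℤ := (PowerSeries.map aug).comp phi

lemma coeff_augExpansion (i : ℕ) (f : RT) :
    PowerSeries.coeff i (augExpansion f) = aug (PowerSeries.coeff i (phi f)) :=
  PowerSeries.coeff_map aug i (phi f)

lemma phi_C (r : R2) : phi (LaurentPolynomial.C r) = PowerSeries.C r := by
  rw [show phi (LaurentPolynomial.C r) = r • _ from AddMonoidAlgebra.lift_single _ _ _]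
  simp [Algebra.smul_def, PowerSeries.C_eq_algebraMap]

lemma augExpansion_C (r : R2) : augExpansion (LaurentPolynomial.C r) = PowerSeries.C (aug r) := by
  simp [augExpansion, phi_C]

lemma aug_Xr : aug Xr = 1 := by
  simp [aug, Xr, xu, U, AddMonoidAlgebra.lift_single]

lemma aug_Yr : aug Yr = 1 := by
  simp [aug, Yr, yu, U, AddMonoidAlgebra.lift_single]

lemma map_augExpansion_M1T : M1T.map augExpansion = 1 := by
  ext i j
  fin_cases i <;> fin_cases j <;>
    simp [M1T, Xt, Yt, augExpansion_C, aug_Xr, aug_Yr]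

end

theorem commutator_coefficients_in_aug_general
    (m1 m2t : (Matrix (Fin 2) (Fin 2) RT)ˣ)
    (h1 : (m1 : Matrix (Fin 2) (Fin 2) RT) = M1T)
    (g : (Matrix (Fin 2) (Fin 2) RT)ˣ)
    (hg : g ∈ ⁅Subgroup.closure {m1, m2t}, Subgroup.closure {m1, m2t}⁆) :
    ∀ i : ℕ, 1 ≤ i → ∀ a b : Fin 2,
      PowerSeries.coeff (R := R2) i (phi ((g : Matrix (Fin 2) (Fin 2) RT) a b)) ∈ Saug := by
  intro i hi a b
  let F := Units.map (augExpansion.mapMatrix : Matrix (Fin 2) (Fin 2) RT →+* _).toMonoidHom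
  have hF1 : F m1 = 1 := Units.ext (by simp [F, h1, map_augExpansion_M1T])
  have hFg : (g : Matrix (Fin 2) (Fin 2) RT).map augExpansion = 1 :=
    congrArg Units.val (Subgroup.commutator_closure_pair_le_ker F hF1 m2t hg)
  have hentry : augExpansion ((g : Matrix (Fin 2) (Fin 2) RT) a b) = (1 : Matrix _ _ _) a b :=
    congrFun (congrFun hFg a) b
  rw [Saug, RingHom.mem_ker, ← coeff_augExpansion, hentry, Matrix.one_apply]
  split_ifs <;> simp [PowerSeries.coeff_one, Nat.one_le_iff_ne_zero.mp hi]

/-- If `g` is in the commutator subgroup of `F(ℛ[t, t⁻¹]) = ⟨M₁, M₂T⟩` and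
`g = M_g + Σ_{i≥1} (t-1)ⁱ Aᵢ` is its expansion in powers of `t - 1`, then every
coefficient matrix `Aᵢ` (`i ≥ 1`) has all entries in the augmentation ideal `Σ`. -/
theorem commutator_coefficients_in_aug
    (m1 m2t : (Matrix (Fin 2) (Fin 2) RT)ˣ)
    (h1 : (m1 : Matrix (Fin 2) (Fin 2) RT) = M1T)
    (h2 : (m2t : Matrix (Fin 2) (Fin 2) RT) = M2T * Tm)
    (g : (Matrix (Fin 2) (Fin 2) RT)ˣ)
    (hg : g ∈ ⁅Subgroup.closure {m1, m2t}, Subgroup.closure {m1, m2t}⁆) :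
    ∀ i : ℕ, 1 ≤ i → ∀ a b : Fin 2,
      PowerSeries.coeff (R := R2) i (phi ((g : Matrix (Fin 2) (Fin 2) RT) a b)) ∈ Saug :=
  commutator_coefficients_in_aug_general m1 m2t h1 g hg
end
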